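/- arXiv:1809.07191 — 6 statements merged into one kernel-verified Lean document; each statement's English description precedes it below -/
import Mathlib

section
/- Let G be a nontrivial subgroup of the additive group of the rationals. Then the endomorphism ring of G (the ring of additive endomorphisms of G) is ring-isomorphic to the subring ℤ[1/p : p ∈ M] of ℚ, where M is the set of primes p such that every element of G is divisible within G by every power of p (i.e., for all g ∈ G and all n, there exists h ∈ G with pⁿ·h = g). -/
/-!
Any two elements of a subgroup `G ≤ ℚ` are `ℤ`-linearly dependent, so every endomorphism of `G`
is multiplication by a rational `q`, and `q` must lie in the multiplier ring `{q | q • G ⊆ G}`;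
for `G ≠ 0` this identifies `End G` with the multiplier ring. Every subring `S` of `ℚ` equals
`ℤ[1/p : p⁻¹ ∈ S]`, because Bézout gives `1 / den q ∈ S` for `q ∈ S`. Finally, `p⁻¹` multiplies
`G` into itself exactly when every element of `G` is divisible by every power of `p`.
-/

def zLoc (P : Set ℕ) : Subring ℚ :=
  Subring.closure {x : ℚ | ∃ p ∈ P, x = (p : ℚ)⁻¹}

namespace AddSubgroup

variable {R : Type*} [Ring R]

def multiplierRing (G : AddSubgroup R) : Subring R where
  carrier := {r | ∀ g ∈ G, r * g ∈ G}
  zero_mem' g _ := by simp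
  one_mem' g hg := by simpa using hg
  add_mem' ha hb g hg := by simpa [add_mul] using G.add_mem (ha g hg) (hb g hg)
  neg_mem' ha g hg := by simpa [neg_mul] using G.neg_mem (ha g hg)
  mul_mem' ha hb g hg := by simpa [mul_assoc] using ha _ (hb g hg)

theorem mem_multiplierRing {G : AddSubgroup R} {r : R} :
    r ∈ G.multiplierRing ↔ ∀ g ∈ G, r * g ∈ G :=
  Iff.rfl

def mulLeftEnd (G : AddSubgroup R) : G.multiplierRing →+* AddMonoid.End G where
  toFun r :=
    { toFun x := ⟨r * x, r.2 x x.2⟩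
      map_zero' := by ext; simp
      map_add' x y := by ext; simp [mul_add] }
  map_one' := AddMonoidHom.ext fun x => Subtype.ext (one_mul (x : R))
  map_mul' r s := AddMonoidHom.ext fun x => Subtype.ext (mul_assoc (r : R) s x)
  map_zero' := AddMonoidHom.ext fun x => Subtype.ext (zero_mul (x : R))
  map_add' r s := AddMonoidHom.ext fun x => Subtype.ext (add_mul (r : R) s x)

theorem inv_mem_multiplierRing_iff {K : Type*} [DivisionRing K] (G : AddSubgroup K)
    {a : K} (ha : a ≠ 0) :
    a⁻¹ ∈ G.multiplierRing ↔ ∀ g ∈ G, ∀ n : ℕ, ∃ h ∈ G, a ^ n * h = g := by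
  constructor
  · intro h g hg n
    refine ⟨a⁻¹ ^ n * g, G.mem_multiplierRing.mp (pow_mem h n) g hg, ?_⟩
    rw [← mul_assoc, inv_pow, mul_inv_cancel₀ (pow_ne_zero n ha), one_mul]
  · intro h g hg
    obtain ⟨k, hk, rfl⟩ := h g hg 1
    simpa [← mul_assoc, inv_mul_cancel₀ ha] using hk

variable (G : AddSubgroup ℚ)

theorem mul_map_eq_mul_map (φ : G →+ ℚ) (x y : G) : (x : ℚ) * φ y = y * φ x := by
  rcases eq_or_ne (y : ℚ) 0 with hy | hy
  · simp [show y = 0 from Subtype.ext hy]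
  -- `x` and `y` are `ℤ`-linearly dependent: `n • x = m • y` with `n ≠ 0`.
  set n : ℤ := (y : ℚ).num * (x : ℚ).den
  set m : ℤ := (x : ℚ).num * (y : ℚ).den
  have hn : (n : ℚ) ≠ 0 := by
    push_cast [n]
    exact mul_ne_zero (Int.cast_ne_zero.2 (Rat.num_ne_zero.2 hy)) (by positivity)
  have hxy : (n : ℚ) * x = m * y := by
    push_cast [n, m]
    linear_combination ((y : ℚ).num : ℚ) * Rat.den_mul_eq_num (x : ℚ) -
      ((x : ℚ).num : ℚ) * Rat.den_mul_eq_num (y : ℚ)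
  have hφ : (n : ℚ) * φ x = m * φ y := by
    have : n • x = m • y := Subtype.ext (by simpa [zsmul_eq_mul] using hxy)
    simpa [zsmul_eq_mul] using congrArg φ this
  apply mul_left_cancel₀ hn
  linear_combination φ y * hxy - (y : ℚ) * hφ

theorem exists_map_eq_mul (φ : G →+ ℚ) : ∃ q : ℚ, ∀ x : G, φ x = q * x := by
  by_cases h : ∃ g₀ : G, (g₀ : ℚ) ≠ 0
  · obtain ⟨g₀, hg₀⟩ := h
    refine ⟨φ g₀ / g₀, fun x => ?_⟩
    rw [div_mul_eq_mul_div, eq_div_iff hg₀]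
    linear_combination -G.mul_map_eq_mul_map φ x g₀
  · push Not at h
    exact ⟨0, fun x => by simp [show x = 0 from Subtype.ext (h x)]⟩

theorem mulLeftEnd_bijective (hG : G ≠ ⊥) : Function.Bijective G.mulLeftEnd := by
  constructor
  · obtain ⟨g₀, hg₀⟩ := ne_bot_iff_exists_ne_zero.mp hG
    intro r s h
    exact Subtype.ext <| mul_right_cancel₀ (Subtype.coe_ne_coe.2 hg₀)
      (congrArg (fun φ : AddMonoid.End G => ((φ g₀ : G) : ℚ)) h)
  · intro φ
    obtain ⟨q, hq⟩ := G.exists_map_eq_mul (G.subtype.comp φ)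
    have hqG : q ∈ G.multiplierRing := fun g hg => hq ⟨g, hg⟩ ▸ (φ ⟨g, hg⟩).2
    exact ⟨⟨q, hqG⟩, AddMonoidHom.ext fun x => Subtype.ext (hq x).symm⟩

end AddSubgroup

theorem Subring.inv_den_mem {S : Subring ℚ} {q : ℚ} (hq : q ∈ S) : (q.den : ℚ)⁻¹ ∈ S := by
  obtain ⟨u, v, huv⟩ := Rat.isCoprime_num_den q
  have h : (q.den : ℚ)⁻¹ = u * q + v := by
    have huv' : (u : ℚ) * q.num + v * q.den = 1 := by exact_mod_cast huv
    field_simp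
    linear_combination -huv' - (u : ℚ) * Rat.mul_den_eq_num q
  rw [h]
  exact add_mem (mul_mem (intCast_mem S u) hq) (intCast_mem S v)

theorem Subring.natCast_inv_mem_of_dvd {S : Subring ℚ} {m n : ℕ} (hn : n ≠ 0) (hmn : m ∣ n)
    (h : (n : ℚ)⁻¹ ∈ S) : (m : ℚ)⁻¹ ∈ S := by
  obtain ⟨k, rfl⟩ := hmn
  have hk : (k : ℚ) ≠ 0 := by exact_mod_cast right_ne_zero_of_mul hn
  have : (m : ℚ)⁻¹ = k * (↑(m * k) : ℚ)⁻¹ := by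
    push_cast
    field_simp
  rw [this]
  exact mul_mem (natCast_mem S k) h

theorem inv_mem_zLoc {P : Set ℕ} {p : ℕ} (hp : p ∈ P) : (p : ℚ)⁻¹ ∈ zLoc P :=
  Subring.subset_closure ⟨p, hp, rfl⟩

theorem natCast_inv_mem_zLoc {P : Set ℕ} {n : ℕ} (hn : n ≠ 0)
    (h : ∀ p, p.Prime → p ∣ n → p ∈ P) : (n : ℚ)⁻¹ ∈ zLoc P := by
  induction n using Nat.recOnMul with
  | zero => exact absurd rfl hn
  | one => simp
  | prime p hp => exact inv_mem_zLoc (h p hp dvd_rfl)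
  | mul a b iha ihb =>
    rw [Nat.cast_mul, mul_inv]
    exact mul_mem (iha (left_ne_zero_of_mul hn) fun p hp hpa => h p hp (hpa.mul_right b))
      (ihb (right_ne_zero_of_mul hn) fun p hp hpb => h p hp (hpb.mul_left a))

theorem Subring.eq_zLoc (S : Subring ℚ) : S = zLoc {p | p.Prime ∧ (p : ℚ)⁻¹ ∈ S} := by
  refine le_antisymm (fun q hq => ?_) ?_
  · rw [← Rat.num_div_den q, div_eq_mul_inv]
    refine mul_mem (intCast_mem _ _) (natCast_inv_mem_zLoc q.den_nz fun p hp hpq => ?_)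
    exact ⟨hp, natCast_inv_mem_of_dvd q.den_nz hpq (inv_den_mem hq)⟩
  · rw [zLoc, Subring.closure_le]
    rintro _ ⟨p, ⟨-, hp⟩, rfl⟩
    exact hp

/-- The endomorphism ring of a nontrivial subgroup `G` of `ℚ` is isomorphic to
`ℤ[1/p : p ∈ M]`, where `M` is the set of primes `p` such that every element of `G`
is divisible in `G` by every power of `p`. -/
theorem endRing_iso_zLoc (G : AddSubgroup ℚ) (hG : G ≠ ⊥) :
    Nonempty (AddMonoid.End G ≃+*
      zLoc {p : ℕ | p.Prime ∧ ∀ g ∈ G, ∀ n : ℕ, ∃ h ∈ G, (p : ℚ) ^ n * h = g}) := by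
  have hM : {p : ℕ | p.Prime ∧ ∀ g ∈ G, ∀ n : ℕ, ∃ h ∈ G, (p : ℚ) ^ n * h = g} =
      {p : ℕ | p.Prime ∧ (p : ℚ)⁻¹ ∈ G.multiplierRing} :=
    Set.ext fun p => and_congr_right fun hp =>
      (G.inv_mem_multiplierRing_iff (Nat.cast_ne_zero.2 hp.ne_zero)).symm
  rw [hM, ← Subring.eq_zLoc]
  exact ⟨(RingEquiv.ofBijective _ (G.mulLeftEnd_bijective hG)).symm⟩
end

section
/- Let G be a nontrivial subgroup of the additive group of the rationals. Then every additive group endomorphism f of G is given by multiplication by a fixed rational number; that is, there exists r ∈ ℚ such that f(g) = r·g for all g ∈ G. -/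
namespace AddMonoidHom

variable {M : Type*} [AddCommGroup M] [Module ℚ M] {G : AddSubgroup ℚ}

/-- Clearing denominators, `h.num * g.den • g = g.num * h.den • h` in `G`; dividing the image of
this identity under `φ` by `g.den * h.den` needs the `ℚ`-module structure of `M`. -/
theorem coe_smul_map_comm (φ : G →+ M) (g h : G) :
    (h : ℚ) • φ g = (g : ℚ) • φ h := by
  have hcross : (h.1.num * g.1.den) • g = (g.1.num * h.1.den) • h := by
    ext
    simp only [AddSubgroup.coe_zsmul, zsmul_eq_mul]
    push_cast
    rw [← Rat.mul_den_eq_num g.1, ← Rat.mul_den_eq_num h.1]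
    ring
  have hφ := congrArg φ hcross
  rw [map_zsmul, map_zsmul, ← Int.cast_smul_eq_zsmul ℚ, ← Int.cast_smul_eq_zsmul ℚ] at hφ
  have hden : ((g : ℚ).den * (h : ℚ).den : ℚ) ≠ 0 := by positivity
  apply smul_right_injective M hden
  simp only [smul_smul]
  convert hφ using 2 <;> push_cast
  · rw [← Rat.mul_den_eq_num h.1]; ring
  · rw [← Rat.mul_den_eq_num g.1]; ring

theorem exists_eq_coe_smul (φ : G →+ M) : ∃ v : M, ∀ g : G, φ g = (g : ℚ) • v := by
  by_cases hG : ∃ g₀ : G, (g₀ : ℚ) ≠ 0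
  · obtain ⟨g₀, hg₀⟩ := hG
    refine ⟨(g₀ : ℚ)⁻¹ • φ g₀, fun g => ?_⟩
    rw [smul_smul, mul_comm, ← smul_smul, ← coe_smul_map_comm, inv_smul_smul₀ hg₀]
  · push Not at hG
    refine ⟨0, fun g => ?_⟩
    rw [smul_zero, show g = 0 from Subtype.ext (hG g), map_zero]

end AddMonoidHom

theorem endomorphism_eq_mul_rat_general (G : AddSubgroup ℚ) (f : G →+ G) :
    ∃ r : ℚ, ∀ g : G, (f g : ℚ) = r * (g : ℚ) := by
  obtain ⟨r, hr⟩ := (G.subtype.comp f).exists_eq_coe_smul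
  exact ⟨r, fun g => (hr g).trans (mul_comm _ _)⟩

/-- Every additive endomorphism of a nontrivial subgroup of `ℚ` is multiplication
by a fixed rational number. -/
theorem endomorphism_eq_mul_rat (G : AddSubgroup ℚ) (hG : G ≠ ⊥) (f : G →+ G) :
    ∃ r : ℚ, ∀ g : G, (f g : ℚ) = r * (g : ℚ) :=
  endomorphism_eq_mul_rat_general G f
end

section
/- Let P be a set of primes containing all but finitely many primes. Then the subring ℤ[1/p : p ∈ P] of ℚ has 1 in the stable range. -/
/-- A ring `R` has 1 in the stable range if whenever `f₁ * g₁ + f₂ * g₂ = 1`,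
there is `h` such that `f₁ + f₂ * h` is a unit. -/
def HasOneInStableRange (R : Type) [Ring R] : Prop :=
  ∀ f₁ f₂ g₁ g₂ : R, f₁ * g₁ + f₂ * g₂ = 1 → ∃ h : R, IsUnit (f₁ + f₂ * h)

/-!
`ℤ[1/p : p ∈ P]` is the localization of `ℤ` at the monoid generated by `P`, so its prime ideals
correspond to `0` and the ideals `qℤ` for the finitely many primes `q ∉ P`: the ring is semilocal.
In a semilocal ring, if `f₁ g₁ + f₂ g₂ = 1`, the Chinese remainder theorem gives `h ≡ 1` modulo
the maximal ideals containing `f₁` and `h ≡ 0` modulo the others; then `f₁ + f₂ h` lies in no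
maximal ideal.
-/

open Ideal

theorem hasOneInStableRange_of_finite_maximalSpectrum (R : Type) [CommRing R]
    [Finite (MaximalSpectrum R)] : HasOneInStableRange R := by
  classical
  intro f₁ f₂ g₁ g₂ hfg
  obtain ⟨h, hh⟩ := exists_forall_sub_mem_ideal (I := fun m : MaximalSpectrum R ↦ m.asIdeal)
    (fun _ _ ne ↦ isCoprime_of_isMaximal (MaximalSpectrum.ext_iff.ne.mp ne))
    (fun m ↦ if f₁ ∈ m.asIdeal then 1 else 0)
  refine ⟨h, of_not_not fun hu ↦ ?_⟩
  obtain ⟨m, hm, hmem⟩ := exists_max_ideal_of_mem_nonunits hu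
  have hhm := hh ⟨m, hm⟩
  by_cases hf₁ : f₁ ∈ m
  · simp only [hf₁, if_true] at hhm
    have hf₂h : f₂ * h ∈ m := (m.add_mem_iff_right hf₁).mp hmem
    rcases hm.isPrime.mem_or_mem hf₂h with hf₂ | hhm'
    · exact hm.ne_top (m.eq_top_of_isUnit_mem (hfg ▸ m.add_mem (m.mul_mem_right _ hf₁)
        (m.mul_mem_right _ hf₂)) isUnit_one)
    · exact hm.ne_top (m.eq_top_of_isUnit_mem (by simpa using m.sub_mem hhm' hhm) isUnit_one)
  · simp only [hf₁, if_false, sub_zero] at hhm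
    exact hf₁ ((m.add_mem_iff_left (m.mul_mem_left f₂ hhm)).mp hmem)

theorem finite_maximalSpectrum_of_isLocalization {R S : Type*} [CommRing R] [CommRing S]
    [Algebra R S] (M : Submonoid R) [IsLocalization M S]
    (h : {I : Ideal R | I.IsPrime ∧ Disjoint (M : Set R) I}.Finite) :
    Finite (MaximalSpectrum S) :=
  have : Finite {p : Ideal S // p.IsPrime} :=
    @Finite.of_equiv _ _ h.to_subtype (IsLocalization.orderIsoOfPrime M S).symm.toEquiv
  .of_injective (fun m ↦ (⟨m.asIdeal, m.isMaximal.isPrime⟩ : {p : Ideal S // p.IsPrime}))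
    fun _ _ h ↦ MaximalSpectrum.ext (congrArg Subtype.val h)

theorem Int.finite_setOf_isPrime_disjoint (M : Submonoid ℤ)
    (hM : {p : ℕ | p.Prime ∧ (p : ℤ) ∉ M}.Finite) :
    {I : Ideal ℤ | I.IsPrime ∧ Disjoint (M : Set ℤ) I}.Finite := by
  refine ((hM.image fun p : ℕ ↦ span {(p : ℤ)}).insert ⊥).subset ?_
  rintro I ⟨hI, hdisj⟩
  rcases isPrime_int_iff.mp hI with rfl | ⟨p, hp, rfl⟩
  · exact Set.mem_insert _ _
  · exact Set.mem_insert_of_mem _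
      ⟨p, ⟨hp, fun hpM ↦ Set.disjoint_left.mp hdisj hpM (subset_span rfl)⟩, rfl⟩

namespace zLoc

variable {P : Set ℕ}

theorem exists_mul_eq_intCast (h0 : 0 ∉ P) {x : ℚ} (hx : x ∈ zLoc P) :
    ∃ a : ℤ, ∃ d ∈ Submonoid.closure ((Nat.cast : ℕ → ℤ) '' P), x * d = a := by
  induction hx using Subring.closure_induction with
  | mem x hx =>
    obtain ⟨p, hp, rfl⟩ := hx
    exact ⟨1, p, Submonoid.subset_closure ⟨p, hp, rfl⟩, by
      have : (p : ℚ) ≠ 0 := Nat.cast_ne_zero.mpr (ne_of_mem_of_not_mem hp h0)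
      simp [this]⟩
  | zero => exact ⟨0, 1, one_mem _, by simp⟩
  | one => exact ⟨1, 1, one_mem _, by simp⟩
  | add _ _ _ _ hx hy =>
    obtain ⟨a, d, hd, hxd⟩ := hx
    obtain ⟨b, e, he, hye⟩ := hy
    exact ⟨a * e + b * d, d * e, mul_mem hd he, by push_cast; linear_combination e * hxd + d * hye⟩
  | neg _ _ hx =>
    obtain ⟨a, d, hd, hxd⟩ := hx
    exact ⟨-a, d, hd, by push_cast; linear_combination -hxd⟩
  | mul _ y _ _ hx hy =>
    obtain ⟨a, d, hd, hxd⟩ := hx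
    obtain ⟨b, e, he, hye⟩ := hy
    exact ⟨a * b, d * e, mul_mem hd he, by push_cast; linear_combination (y * e) * hxd + a * hye⟩

theorem isLocalization (h0 : 0 ∉ P) :
    IsLocalization (Submonoid.closure ((Nat.cast : ℕ → ℤ) '' P)) (zLoc P) where
  map_units := by
    rintro ⟨d, hd⟩
    induction hd using Submonoid.closure_induction with
    | mem d hd =>
      obtain ⟨p, hp, rfl⟩ := hd
      have : (p : ℚ) ≠ 0 := Nat.cast_ne_zero.mpr (ne_of_mem_of_not_mem hp h0)
      exact IsUnit.of_mul_eq_one ⟨(p : ℚ)⁻¹, Subring.subset_closure ⟨p, hp, rfl⟩⟩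
        (Subtype.ext (by simp [this]))
    | one => simp
    | mul _ _ _ _ hd he => simpa using hd.mul he
  surj z := by
    obtain ⟨a, d, hd, h⟩ := exists_mul_eq_intCast h0 z.2
    exact ⟨(a, ⟨d, hd⟩), Subtype.ext (by simpa using h)⟩
  exists_of_eq h := ⟨1, by simpa using congrArg Subtype.val h⟩

end zLoc

/-- If `P` contains all but finitely many primes, then `ℤ[1/p : p ∈ P]` has 1 in
the stable range. -/
theorem hasOneInStableRange_of_cofinite (P : Set ℕ) (hP : ∀ p ∈ P, p.Prime)
    (hcof : ({p : ℕ | p.Prime} \ P).Finite) :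
    HasOneInStableRange (zLoc P) := by
  have := zLoc.isLocalization fun h ↦ Nat.not_prime_zero (hP 0 h)
  have : Finite (MaximalSpectrum (zLoc P)) :=
    finite_maximalSpectrum_of_isLocalization _ <| Int.finite_setOf_isPrime_disjoint _ <|
      hcof.subset fun p hp ↦
        ⟨hp.1, fun hpP ↦ hp.2 (Submonoid.subset_closure (Set.mem_image_of_mem _ hpP))⟩
  exact hasOneInStableRange_of_finite_maximalSpectrum _
end

section
/- Let P be a finite set of primes. Then the subring ℤ[1/p : p ∈ P] of ℚ does not have 1 in the stable range. -/
/-!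
Take a prime `r > 8 * ∏ P` with `r ≡ 1 [MOD 8 * ∏ P]`. Then `r ∉ P`, and `-1` and every
`p ∈ P` are squares mod `r` (for odd `p` by quadratic reciprocity, since `r ≡ 1 [MOD p]` and
`r ≡ 1 [MOD 4]`). Reduction mod `r` is a ring map `ℤ[1/P] → 𝔽_r`, and a unit of `ℤ[1/P]` is
`± ∏ p ^ kₚ`, so it reduces to a square. On the other hand, 1 in the stable range lets units
lift along any surjective ring map: if `f a = s` and `f b = s⁻¹`, then
`a * b + (1 - a * b) * 1 = 1` gives `h` with `a + (1 - a * b) * h` a unit, and its image is `s`.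
Lifting a nonsquare of `𝔽_r` gives a contradiction.
-/

theorem HasOneInStableRange.exists_isUnit_map_eq {R : Type} {S : Type*} [Ring R] [Ring S]
    (hR : HasOneInStableRange R) (f : R →+* S) (hf : Function.Surjective f) {s : S}
    (hs : IsUnit s) : ∃ u : R, IsUnit u ∧ f u = s := by
  obtain ⟨a, rfl⟩ := hf s
  obtain ⟨b, hb⟩ := hf ↑hs.unit⁻¹
  have hab : f (1 - a * b) = 0 := by simp [hb]
  obtain ⟨h, hu⟩ := hR a (1 - a * b) b 1 (by noncomm_ring)
  exact ⟨_, hu, by simp [hab]⟩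

theorem Submonoid.natCast_mem_of_forall_prime_dvd {R : Type*} [Semiring R] (M : Submonoid R)
    {n : ℕ} (hn : n ≠ 0) (h : ∀ p : ℕ, p.Prime → p ∣ n → (p : R) ∈ M) : (n : R) ∈ M := by
  induction n using induction_on_primes with
  | zero => exact absurd rfl hn
  | one => simp
  | prime_mul p a hp ih =>
    rw [Nat.cast_mul]
    exact M.mul_mem (h p hp (dvd_mul_right p a))
      (ih (right_ne_zero_of_mul hn) fun q hq hqa => h q hq (hqa.mul_left p))

theorem isSquare_intCast_of_isSquare_natAbs {R : Type*} [CommRing R] (hneg : IsSquare (-1 : R))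
    {n : ℤ} (h : IsSquare (n.natAbs : R)) : IsSquare (n : R) := by
  rcases Int.natAbs_eq n with hn | hn <;> rw [hn]
  · simpa using h
  · simpa using hneg.mul h

theorem ZMod.isSquare_natCast_of_modEq_one {p r : ℕ} [Fact p.Prime] [Fact r.Prime]
    (h : r ≡ 1 [MOD 8 * p]) : IsSquare (p : ZMod r) := by
  have hr8 : r % 8 = 1 := h.of_dvd (dvd_mul_right 8 p)
  by_cases hp2 : p = 2
  · subst hp2
    simpa using (ZMod.exists_sq_eq_two_iff (p := r) (by omega)).mpr (Or.inl hr8)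
  · rw [ZMod.exists_sq_eq_prime_iff_of_mod_four_eq_one (by omega) hp2,
      (ZMod.natCast_eq_natCast_iff r 1 p).mpr (h.of_dvd (dvd_mul_left p 8)), Nat.cast_one]
    exact IsSquare.one

theorem exists_prime_forall_isSquare {P : Set ℕ} (hP : ∀ p ∈ P, p.Prime) (hfin : P.Finite) :
    ∃ r : ℕ, r.Prime ∧ r ≠ 2 ∧ r ∉ P ∧ IsSquare (-1 : ZMod r) ∧
      ∀ p ∈ P, IsSquare (p : ZMod r) := by
  set N := 8 * ∏ p ∈ hfin.toFinset, p
  have hN : N ≠ 0 := mul_ne_zero (by norm_num) <| Finset.prod_ne_zero_iff.mpr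
    fun p hp => (hP p (hfin.mem_toFinset.mp hp)).ne_zero
  have hdvd : ∀ p ∈ P, 8 * p ∣ N := fun p hp =>
    mul_dvd_mul_left 8 (Finset.dvd_prod_of_mem _ (hfin.mem_toFinset.mpr hp))
  obtain ⟨r, hr, hNr, hr1⟩ := Nat.exists_prime_gt_modEq_one N hN
  have := Fact.mk hr
  have hr8 : r % 8 = 1 := hr1.of_dvd (Dvd.intro _ rfl)
  refine ⟨r, hr, by omega, fun hrP => ?_, ZMod.exists_sq_eq_neg_one_iff.mpr (by omega),
    fun p hp => ?_⟩
  · exact hNr.not_ge <|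
      Nat.le_of_dvd (Nat.pos_of_ne_zero hN) ((dvd_mul_left r 8).trans (hdvd r hrP))
  · have := Fact.mk (hP p hp)
    exact ZMod.isSquare_natCast_of_modEq_one (hr1.of_dvd (hdvd p hp))

namespace zLoc

variable {P : Set ℕ}

theorem le_comap_padicInt_subring (hP : ∀ p ∈ P, p.Prime) {ℓ : ℕ} [Fact ℓ.Prime] (hℓ : ℓ ∉ P) :
    zLoc P ≤ (PadicInt.subring ℓ).comap (Rat.castHom ℚ_[ℓ]) := by
  refine Subring.closure_le.mpr ?_
  rintro _ ⟨p, hp, rfl⟩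
  have : ℓ.Coprime p := (Nat.coprime_primes Fact.out (hP p hp)).mpr (by rintro rfl; exact hℓ hp)
  simp [Padic.norm_natCast_eq_one_iff.mpr this]

noncomputable def toZMod (hP : ∀ p ∈ P, p.Prime) {ℓ : ℕ} [Fact ℓ.Prime] (hℓ : ℓ ∉ P) :
    zLoc P →+* ZMod ℓ :=
  PadicInt.toZMod.comp
    ((Rat.castHom ℚ_[ℓ]).restrict (zLoc P) (PadicInt.subring ℓ)
      (le_comap_padicInt_subring hP hℓ) : zLoc P →+* ℤ_[ℓ])

theorem isUnit_natCast_of_mem (hP : ∀ p ∈ P, p.Prime) {p : ℕ} (hp : p ∈ P) :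
    IsUnit (p : zLoc P) :=
  IsUnit.of_mul_eq_one ⟨(p : ℚ)⁻¹, Subring.subset_closure ⟨p, hp, rfl⟩⟩ <| Subtype.ext <|
    mul_inv_cancel₀ (Nat.cast_ne_zero.mpr (hP p hp).ne_zero)

theorem isUnit_natCast (hP : ∀ p ∈ P, p.Prime) {n : ℕ} (hn : n ≠ 0)
    (h : ∀ p : ℕ, p.Prime → p ∣ n → p ∈ P) : IsUnit (n : zLoc P) :=
  Submonoid.natCast_mem_of_forall_prime_dvd (IsUnit.submonoid _) hn fun p hp hpn =>
    isUnit_natCast_of_mem hP (h p hp hpn)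

theorem mem_of_prime_dvd_den (hP : ∀ p ∈ P, p.Prime) {x : ℚ} (hx : x ∈ zLoc P) {ℓ : ℕ}
    (hℓ : ℓ.Prime) (hdvd : ℓ ∣ x.den) : ℓ ∈ P := by
  by_contra hℓP
  have := Fact.mk hℓ
  have hreduce : toZMod hP hℓP ⟨x, hx⟩ * x.den = x.num := by
    rw [← map_natCast (toZMod hP hℓP), ← map_intCast (toZMod hP hℓP), ← map_mul]
    exact congrArg _ (Subtype.ext (by simp [Rat.mul_den_eq_num]))
  rw [(ZMod.natCast_eq_zero_iff _ _).mpr hdvd, mul_zero, eq_comm,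
    ZMod.intCast_zmod_eq_zero_iff_dvd, Int.natCast_dvd] at hreduce
  exact hℓ.ne_one (Nat.eq_one_of_dvd_coprimes x.reduced hreduce hdvd)

theorem mem_of_prime_dvd_of_isUnit (hP : ∀ p ∈ P, p.Prime) {n : ℤ} (hn : IsUnit (n : zLoc P))
    {ℓ : ℕ} (hℓ : ℓ.Prime) (hdvd : (ℓ : ℤ) ∣ n) : ℓ ∈ P := by
  by_contra hℓP
  have := Fact.mk hℓ
  have := hn.map (toZMod hP hℓP)
  rw [map_intCast, (ZMod.intCast_zmod_eq_zero_iff_dvd n ℓ).mpr hdvd] at this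
  exact not_isUnit_zero this

theorem isSquare_map_of_isUnit (hP : ∀ p ∈ P, p.Prime) {K : Type*} [Field K] (ψ : zLoc P →+* K)
    (hneg : IsSquare (-1 : K)) (hsq : ∀ p ∈ P, IsSquare (p : K)) {u : zLoc P} (hu : IsUnit u) :
    IsSquare (ψ u) := by
  set x : ℚ := (u : ℚ)
  -- `u = num / den`, where `den` and `num = u * den` are units of `zLoc P`.
  have hsq_nat : ∀ n : ℕ, n ≠ 0 → (∀ ℓ : ℕ, ℓ.Prime → ℓ ∣ n → ℓ ∈ P) → IsSquare (n : K) :=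
    fun n hn h => Submonoid.natCast_mem_of_forall_prime_dvd (Submonoid.square K) hn
      fun ℓ hℓ hdvd => hsq ℓ (h ℓ hℓ hdvd)
  have hden_mem : ∀ ℓ : ℕ, ℓ.Prime → ℓ ∣ x.den → ℓ ∈ P := fun ℓ hℓ =>
    mem_of_prime_dvd_den hP u.2 hℓ
  have hden : IsUnit (x.den : zLoc P) := isUnit_natCast hP x.den_nz hden_mem
  have hnum_eq : (x.num : zLoc P) = u * x.den := Subtype.ext (by simp [x, Rat.mul_den_eq_num])
  have hnum : IsUnit (x.num : zLoc P) := hnum_eq ▸ hu.mul hden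
  have hψ : ψ u = x.num / x.den := by
    rw [← map_intCast ψ, ← map_natCast ψ, hnum_eq, map_mul,
      mul_div_cancel_right₀ _ (hden.map ψ).ne_zero]
  rw [hψ]
  refine (isSquare_intCast_of_isSquare_natAbs hneg (hsq_nat _ ?_ fun ℓ hℓ hdvd => ?_)).div
    (hsq_nat _ x.den_nz hden_mem)
  · exact Int.natAbs_ne_zero.mpr (Rat.num_ne_zero.mpr (by simpa [x] using hu.ne_zero))
  · exact mem_of_prime_dvd_of_isUnit hP hnum hℓ (Int.natCast_dvd.mpr hdvd)

end zLoc

/-- If `P` is a finite set of primes, then `ℤ[1/p : p ∈ P]` does not have 1 in the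
stable range. -/
theorem not_hasOneInStableRange_of_finite (P : Set ℕ) (hP : ∀ p ∈ P, p.Prime)
    (hfin : P.Finite) :
    ¬ HasOneInStableRange (zLoc P) := by
  intro hsr
  obtain ⟨r, hr, hr2, hrP, hneg, hsq⟩ := exists_prime_forall_isSquare hP hfin
  have := Fact.mk hr
  obtain ⟨c, hc⟩ := FiniteField.exists_nonsquare (F := ZMod r) (by rwa [ZMod.ringChar_zmod_n])
  have hcu : IsUnit c := isUnit_iff_ne_zero.mpr (by rintro rfl; exact hc IsSquare.zero)
  obtain ⟨u, hu, rfl⟩ := hsr.exists_isUnit_map_eq (zLoc.toZMod hP hrP)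
    (ZMod.ringHom_surjective _) hcu
  exact hc (zLoc.isSquare_map_of_isUnit hP _ hneg hsq hu)
end

section
/- Let P be a set of primes such that for every integer m ≥ 2 and every unit c of ℤ/mℤ, there is a finite product of primes from P, each not dividing m, whose image in ℤ/mℤ equals c. Then the subring ℤ[1/p : p ∈ P] of ℚ has 1 in the stable range. -/
/-! Clearing denominators, which are units of `ℤ[1/P]`, turns `f₁ g₁ + f₂ g₂ = 1` into
`a c + b c' = d e` in `ℤ` with `d e` a unit of `ℤ[1/P]`; hence `gcd a b` is a unit there too.
Write `a = g a'`, `b = g b'` with `a'`, `b'` coprime. Then `a'` is a unit modulo `b'`, so some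
product `n` of primes of `P` satisfies `a' + b' k = n`, and `f₁ + f₂ k = g n / d` is a unit. -/

def ProductsCoverUnitsMod (P : Set ℕ) : Prop :=
  ∀ m : ℕ, 2 ≤ m → ∀ c : (ZMod m)ˣ,
    ∃ s : Multiset ℕ, (∀ p ∈ s, p ∈ P ∧ ¬ p ∣ m) ∧ ((s.prod : ℕ) : ZMod m) = (c : ZMod m)

namespace zLoc

variable {P : Set ℕ}

lemma isUnit_natCast_s9 {p : ℕ} (hp : p ∈ P) (hp0 : p ≠ 0) : IsUnit (p : zLoc P) := by
  have hinv : (p : ℚ)⁻¹ ∈ zLoc P := Subring.subset_closure ⟨p, hp, rfl⟩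
  refine IsUnit.of_mul_eq_one (⟨_, hinv⟩ : zLoc P) (Subtype.ext ?_)
  simp [hp0]

lemma isUnit_natCast_multiset_prod {s : Multiset ℕ} (hs : ∀ p ∈ s, p ∈ P) (h0 : s.prod ≠ 0) :
    IsUnit ((s.prod : ℕ) : zLoc P) :=
  Multiset.prod_induction (fun n : ℕ => IsUnit (n : zLoc P)) s
    (fun m n hm hn => by simpa only [Nat.cast_mul] using hm.mul hn) (by simp)
    (fun p hp => isUnit_natCast_s9 (hs p hp) fun hp0 => h0 (Multiset.prod_eq_zero (hp0 ▸ hp)))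

lemma exists_isUnit_mul_eq_intCast (x : zLoc P) :
    ∃ d a : ℤ, IsUnit (d : zLoc P) ∧ x * d = a := by
  obtain ⟨x, hx⟩ := x
  induction hx using Subring.closure_induction with
  | mem x hx =>
    obtain ⟨p, hp, rfl⟩ := hx
    rcases eq_or_ne p 0 with rfl | hp0
    · -- `0 ∈ P` contributes the generator `0⁻¹ = 0`
      exact ⟨1, 0, by simp, Subtype.ext (by simp)⟩
    · refine ⟨p, 1, by exact_mod_cast isUnit_natCast_s9 hp hp0, Subtype.ext ?_⟩
      simp [hp0]
  | zero => exact ⟨1, 0, by simp, Subtype.ext (by simp)⟩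
  | one => exact ⟨1, 1, by simp, Subtype.ext (by simp)⟩
  | add x y hx hy ihx ihy =>
    obtain ⟨d, a, hd, hxa⟩ := ihx
    obtain ⟨e, b, he, hyb⟩ := ihy
    refine ⟨d * e, a * e + b * d, by simpa using hd.mul he, ?_⟩
    have hsum : (⟨x + y, add_mem hx hy⟩ : zLoc P) = ⟨x, hx⟩ + ⟨y, hy⟩ := rfl
    rw [hsum]
    push_cast
    rw [← hxa, ← hyb]
    ring
  | neg x hx ihx =>
    obtain ⟨d, a, hd, hxa⟩ := ihx
    refine ⟨d, -a, hd, ?_⟩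
    have hneg : (⟨-x, neg_mem hx⟩ : zLoc P) = -⟨x, hx⟩ := rfl
    rw [hneg, Int.cast_neg, ← hxa, neg_mul]
  | mul x y hx hy ihx ihy =>
    obtain ⟨d, a, hd, hxa⟩ := ihx
    obtain ⟨e, b, he, hyb⟩ := ihy
    refine ⟨d * e, a * b, by simpa using hd.mul he, ?_⟩
    have hprod : (⟨x * y, mul_mem hx hy⟩ : zLoc P) = ⟨x, hx⟩ * ⟨y, hy⟩ := rfl
    rw [hprod]
    push_cast
    rw [← hxa, ← hyb]
    ring

lemma exists_isUnit_mul_eq_intCast₂ (x y : zLoc P) :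
    ∃ d a b : ℤ, IsUnit (d : zLoc P) ∧ x * d = a ∧ y * d = b := by
  obtain ⟨d, a, hd, hxa⟩ := exists_isUnit_mul_eq_intCast x
  obtain ⟨e, b, he, hyb⟩ := exists_isUnit_mul_eq_intCast y
  refine ⟨d * e, a * e, b * d, by simpa using hd.mul he, ?_, ?_⟩
  · push_cast; rw [← hxa]; ring
  · push_cast; rw [← hyb]; ring

lemma exists_isUnit_intCast_eq_of_isCoprime (hgen : ProductsCoverUnitsMod P) {m : ℕ} (hm : m ≠ 0)
    {a : ℤ} (ha : IsCoprime a m) :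
    ∃ n : ℤ, IsUnit (n : zLoc P) ∧ (n : ZMod m) = a := by
  obtain rfl | hm2 : m = 1 ∨ 2 ≤ m := by omega
  · exact ⟨1, by simp, Subsingleton.elim _ _⟩
  obtain ⟨s, hs, hsa⟩ := hgen m hm2 (ZMod.unitOfIsCoprime a ha)
  have : Nontrivial (ZMod m) := ZMod.nontrivial_iff.mpr (by omega)
  have h0 : s.prod ≠ 0 := by
    rintro h0
    have hunit := (ZMod.unitOfIsCoprime a ha).isUnit
    rw [← hsa, h0, Nat.cast_zero] at hunit
    exact not_isUnit_zero hunit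
  refine ⟨s.prod, ?_, by simpa using hsa⟩
  rw [Int.cast_natCast]
  exact isUnit_natCast_multiset_prod (fun p hp => (hs p hp).1) h0

lemma exists_isUnit_add_mul_of_isCoprime (hgen : ProductsCoverUnitsMod P) {a b : ℤ}
    (hab : IsCoprime a b) :
    ∃ k : ℤ, IsUnit ((a + b * k : ℤ) : zLoc P) := by
  rcases eq_or_ne b 0 with rfl | hb
  · exact ⟨0, by simpa using (isCoprime_zero_right.mp hab).map (Int.castRingHom (zLoc P))⟩
  have hab' : IsCoprime a (b.natAbs : ℤ) := by simpa [Int.natCast_natAbs] using hab.abs_right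
  obtain ⟨n, hn, hna⟩ :=
    exists_isUnit_intCast_eq_of_isCoprime hgen (Int.natAbs_ne_zero.mpr hb) hab'
  obtain ⟨k, hk⟩ : b ∣ n - a :=
    Int.natAbs_dvd.mp ((ZMod.intCast_eq_intCast_iff_dvd_sub _ _ _).mp hna.symm)
  exact ⟨k, by rwa [← hk, add_sub_cancel]⟩

lemma exists_isUnit_add_mul (hgen : ProductsCoverUnitsMod P) {a b : ℤ}
    (hab : IsUnit ((Int.gcd a b : ℕ) : zLoc P)) :
    ∃ k : ℤ, IsUnit ((a + b * k : ℤ) : zLoc P) := by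
  have hg : 0 < Int.gcd a b := Nat.pos_of_ne_zero fun h0 => by simp [h0] at hab
  obtain ⟨a', b', hcop, ha, hb⟩ := Int.exists_gcd_one hg
  obtain ⟨k, hk⟩ :=
    exists_isUnit_add_mul_of_isCoprime hgen (Int.isCoprime_iff_gcd_eq_one.mpr hcop)
  refine ⟨k, ?_⟩
  have hfactor : a + b * k = (a' + b' * k) * Int.gcd a b := by linear_combination ha + k * hb
  rw [hfactor, Int.cast_mul, Int.cast_natCast]
  exact hk.mul hab

end zLoc

theorem hasOneInStableRange_of_generates_general (P : Set ℕ)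
    (h : ∀ m : ℕ, 2 ≤ m → ∀ c : (ZMod m)ˣ,
      ∃ s : Multiset ℕ, (∀ p ∈ s, p ∈ P ∧ ¬ p ∣ m) ∧
        ((s.prod : ℕ) : ZMod m) = (c : ZMod m)) :
    HasOneInStableRange (zLoc P) := by
  intro f₁ f₂ g₁ g₂ hfg
  obtain ⟨d, a, b, hd, ha, hb⟩ := zLoc.exists_isUnit_mul_eq_intCast₂ f₁ f₂
  obtain ⟨e, c, c', he, hc, hc'⟩ := zLoc.exists_isUnit_mul_eq_intCast₂ g₁ g₂
  have hint : a * c + b * c' = d * e := by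
    apply Int.cast_injective (α := zLoc P)
    push_cast
    rw [← ha, ← hb, ← hc, ← hc']
    linear_combination (d * e : zLoc P) * hfg
  have hgcd : IsUnit ((Int.gcd a b : ℕ) : zLoc P) := by
    refine isUnit_of_dvd_unit ?_ (hd.mul he)
    rw [← Int.cast_natCast, ← Int.cast_mul, ← hint]
    exact map_dvd (Int.castRingHom (zLoc P))
      (dvd_add (Int.gcd_dvd_left a b |>.mul_right c) (Int.gcd_dvd_right a b |>.mul_right c'))
  obtain ⟨k, hk⟩ := zLoc.exists_isUnit_add_mul h hgcd
  have hnum : (f₁ + f₂ * k) * d = ((a + b * k : ℤ) : zLoc P) := by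
    push_cast
    rw [← ha, ← hb]
    ring
  exact ⟨k, isUnit_of_mul_isUnit_left (hnum ▸ hk)⟩

/-- If every unit of `ℤ/mℤ` (for every `m ≥ 2`) is the image of a finite product of
primes from `P` not dividing `m`, then `ℤ[1/p : p ∈ P]` has 1 in the stable range. -/
theorem hasOneInStableRange_of_generates (P : Set ℕ) (hP : ∀ p ∈ P, p.Prime)
    (h : ∀ m : ℕ, 2 ≤ m → ∀ c : (ZMod m)ˣ,
      ∃ s : Multiset ℕ, (∀ p ∈ s, p ∈ P ∧ ¬ p ∣ m) ∧
        ((s.prod : ℕ) : ZMod m) = (c : ZMod m)) :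
    HasOneInStableRange (zLoc P) :=
  hasOneInStableRange_of_generates_general P h
end

section
/- Let G be a torsion-free abelian group such that the endomorphism ring of G has 1 in the stable range. Then G is cancellable: for all abelian groups H and K, if G ⊕ H ≅ G ⊕ K then H ≅ K. -/
/-- An abelian group `A` is cancellable if for all abelian groups `G` and `H`,
`A ⊕ G ≅ A ⊕ H` implies `G ≅ H`. -/
def Cancellable (A : Type) [AddCommGroup A] : Prop :=
  ∀ (G H : Type) [AddCommGroup G] [AddCommGroup H],
    Nonempty ((A × G) ≃+ (A × H)) → Nonempty (G ≃+ H)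

/-! Evans' argument. An isomorphism `e : M × N ≃ M × P` makes `p = fst ∘ e : M × N → M` a split
surjection with kernel `≅ P`. For the components `f₁ = p ∘ inl`, `f₂ = p ∘ inr` of `p` and
`g₁, g₂` of a section, `f₁ g₁ + (f₂ g₂) · 1 = 1` in `End M`, so 1 in the stable range yields
`k : M → N` with `f₁ + f₂ k` an automorphism of `M`. Precomposing `p` with the shear
`(a, b) ↦ (a, b + k a)` makes it bijective on `M × 0`, so its kernel is a graph over `N`.
Hence `N ≅ ker p ≅ P`. -/

open Function LinearMap

theorem HasOneInStableRange.of_ringEquiv {S T : Type} [Ring S] [Ring T] (e : S ≃+* T)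
    (h : HasOneInStableRange S) : HasOneInStableRange T := by
  intro f₁ f₂ g₁ g₂ hfg
  obtain ⟨k, hk⟩ := h (e.symm f₁) (e.symm f₂) (e.symm g₁) (e.symm g₂) (by
    simpa only [← map_mul, ← map_add, map_one] using congrArg e.symm hfg)
  exact ⟨e k, by simpa using hk.map e⟩

noncomputable def LinearMap.kerEquivOfBijectiveCompInl {R M N P : Type*} [Ring R]
    [AddCommGroup M] [Module R M] [AddCommGroup N] [Module R N] [AddCommGroup P] [Module R P]
    (q : M × N →ₗ[R] P) (hq : Bijective (q ∘ₗ inl R M N)) : ker q ≃ₗ[R] N := by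
  refine LinearEquiv.ofBijective (snd R M N ∘ₗ (ker q).subtype) ⟨?_, fun b => ?_⟩
  · rw [injective_iff_map_eq_zero]
    rintro ⟨⟨a, b⟩, hab⟩ (rfl : b = 0)
    have : a = 0 := (injective_iff_map_eq_zero _).1 hq.1 a hab
    simp [this]
  · obtain ⟨a, ha⟩ := hq.2 (q (0, b))
    refine ⟨⟨(-a, b), ?_⟩, rfl⟩
    have : ((-a, b) : M × N) = -inl R M N a + (0, b) := by simp
    simp only [mem_ker, this, map_add, map_neg, ← ha, comp_apply, neg_add_cancel]

noncomputable def LinearEquiv.kerCompEquiv {R M N P : Type*} [Semiring R]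
    [AddCommMonoid M] [Module R M] [AddCommMonoid N] [Module R N] [AddCommMonoid P] [Module R P]
    (f : N →ₗ[R] P) (e : M ≃ₗ[R] N) : ker (f ∘ₗ (e : M →ₗ[R] N)) ≃ₗ[R] ker f :=
  e.ofSubmodules _ _ (by rw [LinearMap.ker_comp, Submodule.map_comap_eq_of_surjective e.surjective])

section

variable {R M : Type} {N P : Type*} [Ring R] [AddCommGroup M] [Module R M]
  [AddCommGroup N] [Module R N] [AddCommGroup P] [Module R P]

theorem exists_bijective_add_comp_of_hasOneInStableRange
    (hsr : HasOneInStableRange (Module.End R M)) (p : M × N →ₗ[R] M) (s : M →ₗ[R] M × N)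
    (hps : p ∘ₗ s = LinearMap.id) :
    ∃ k : M →ₗ[R] N, Bijective (p ∘ₗ inl R M N + p ∘ₗ inr R M N ∘ₗ k) := by
  have hsplit :
      (p ∘ₗ inl R M N) * (fst R M N ∘ₗ s) + (p ∘ₗ inr R M N ∘ₗ snd R M N ∘ₗ s) * 1 = 1 := by
    refine LinearMap.ext fun a => ?_
    simpa [Module.End.mul_apply, ← map_add] using LinearMap.congr_fun hps a
  obtain ⟨h, hu⟩ := hsr _ _ _ _ hsplit
  exact ⟨snd R M N ∘ₗ s ∘ₗ h, (Module.End.isUnit_iff _).1 hu⟩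

theorem nonempty_linearEquiv_cancel_left_of_hasOneInStableRange
    (hsr : HasOneInStableRange (Module.End R M)) (e : (M × N) ≃ₗ[R] (M × P)) :
    Nonempty (N ≃ₗ[R] P) := by
  set p := fst R M P ∘ₗ (e : M × N →ₗ[R] M × P)
  obtain ⟨k, hk⟩ := exists_bijective_add_comp_of_hasOneInStableRange hsr p
    (e.symm ∘ₗ inl R M P) (by ext; simp [p])
  let θ := (LinearEquiv.refl R M).skewProd (LinearEquiv.refl R N) k
  have hθ : Bijective ((p ∘ₗ θ) ∘ₗ inl R M N) := by
    convert hk using 1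
    ext a
    simp [θ, ← map_add]
  exact ⟨(kerEquivOfBijectiveCompInl _ hθ).symm ≪≫ₗ θ.kerCompEquiv p ≪≫ₗ e.kerCompEquiv _ ≪≫ₗ
    kerEquivOfBijectiveCompInl (fst R M P) bijective_id⟩

end

theorem cancellable_of_stableRange_general (G : Type) [AddCommGroup G]
    (hsr : HasOneInStableRange (AddMonoid.End G)) :
    Cancellable G := by
  rintro H K _ _ ⟨e⟩
  obtain ⟨f⟩ := nonempty_linearEquiv_cancel_left_of_hasOneInStableRange
    (hsr.of_ringEquiv (addMonoidEndRingEquivInt G)) e.toIntLinearEquiv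
  exact ⟨f.toAddEquiv⟩

/-- A torsion-free abelian group whose endomorphism ring has 1 in the stable range
is cancellable. -/
theorem cancellable_of_stableRange (G : Type) [AddCommGroup G]
    (htf : ∀ (n : ℤ) (g : G), n ≠ 0 → n • g = 0 → g = 0)
    (hsr : HasOneInStableRange (AddMonoid.End G)) :
    Cancellable G :=
  cancellable_of_stableRange_general G hsr
end
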